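/- Let Γ be a finite simple graph with vertex set V = {1, …, n}, let X be a 4-clique of Γ, and let H be the subgroup of P_Γ generated by the six elements {a_{ij} : i < j, {i,j} ⊆ X}. If g ∈ P_Γ commutes with at least five of the six elements a_{ij}, {i,j} ⊆ X, then g commutes with every element of the commutator subgroup [H, H]. -/

import Mathlib

abbrev PBIdx (n : ℕ) : Type := {p : Fin n × Fin n // p.1 < p.2}

namespace GraphicBraid

open scoped commutatorElement

def ofIdx {n : ℕ} {i j : Fin n} (h : i < j) : FreeGroup (PBIdx n) :=
  FreeGroup.of ⟨(i, j), h⟩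

/-- The Artin relators for the pure braid group `P_n`. -/
def pureBraidRels (n : ℕ) : Set (FreeGroup (PBIdx n)) :=
  {w | ∃ (i j r s : Fin n) (hij : i < j) (hrs : r < s),
      (s < i ∨ (i < r ∧ s < j)) ∧ w = ⁅ofIdx hij, ofIdx hrs⁆} ∪
  {w | ∃ (r i s j : Fin n) (hri : r < i) (his : i < s) (hsj : s < j),
      w = ⁅ofIdx (his.trans hsj), ofIdx hsj * ofIdx (hri.trans his) * (ofIdx hsj)⁻¹⁆} ∪
  {w | ∃ (i j r : Fin n) (hij : i < j) (hjr : j < r),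
      w = ⁅ofIdx hij * ofIdx (hij.trans hjr), ofIdx hjr⁆ ∨
      w = ⁅ofIdx hij, ofIdx (hij.trans hjr) * ofIdx hjr⁆}

/-- Relators killing the generators corresponding to non-edges of `Γ`. -/
def nonEdgeRels {n : ℕ} (Γ : SimpleGraph (Fin n)) : Set (FreeGroup (PBIdx n)) :=
  {w | ∃ p : PBIdx n, ¬ Γ.Adj p.1.1 p.1.2 ∧ w = FreeGroup.of p}

def graphicRels {n : ℕ} (Γ : SimpleGraph (Fin n)) : Set (FreeGroup (PBIdx n)) :=
  pureBraidRels n ∪ nonEdgeRels Γ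

/-- The graphic pure braid group `P_Γ`. -/
abbrev GPB {n : ℕ} (Γ : SimpleGraph (Fin n)) : Type := PresentedGroup (graphicRels Γ)

/-- The image of the Artin generator `a_{ij}` in `P_Γ`. -/
def agen {n : ℕ} (Γ : SimpleGraph (Fin n)) {i j : Fin n} (h : i < j) : GPB Γ :=
  PresentedGroup.of (rels := graphicRels Γ) ⟨(i, j), h⟩

/-- Relators killing the generators `a_{ij}` with `{i,j} ⊄ X`. -/
def killRels {n : ℕ} (X : Set (Fin n)) : Set (FreeGroup (PBIdx n)) :=
  {w | ∃ p : PBIdx n, ¬ (p.1.1 ∈ X ∧ p.1.2 ∈ X) ∧ w = FreeGroup.of p}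

/-- The quotient `P_X` of `P_Γ` obtained by killing all generators `a_{ij}` with `{i,j} ⊄ X`. -/
abbrev GPBX {n : ℕ} (Γ : SimpleGraph (Fin n)) (X : Set (Fin n)) : Type :=
  PresentedGroup (graphicRels Γ ∪ killRels X)

/-- The canonical surjection between presented groups when the set of relators grows. -/
def quotMap {α : Type*} {R S : Set (FreeGroup α)} (h : R ⊆ S) :
    PresentedGroup R →* PresentedGroup S :=
  QuotientGroup.map _ _ (MonoidHom.id _)
    (fun _ hx => Subgroup.normalClosure_mono h hx)

/-- The quotient map `ρ_X : P_Γ → P_X`. -/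
def rho {n : ℕ} (Γ : SimpleGraph (Fin n)) (X : Set (Fin n)) : GPB Γ →* GPBX Γ X :=
  quotMap Set.subset_union_left

lemma killRels_anti {n : ℕ} {X Y : Set (Fin n)} (h : X ⊆ Y) : killRels Y ⊆ killRels X := by
  rintro w ⟨p, hp, rfl⟩
  exact ⟨p, fun hx => hp ⟨h hx.1, h hx.2⟩, rfl⟩

/-- The quotient map `P_Y → P_X` for `X ⊆ Y`. -/
def rhoDown {n : ℕ} (Γ : SimpleGraph (Fin n)) {X Y : Set (Fin n)} (h : X ⊆ Y) :
    GPBX Γ Y →* GPBX Γ X :=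
  quotMap (Set.union_subset_union_right _ (killRels_anti h))

/-- `X` is a maximal clique of `Γ`. -/
def MaxClique {n : ℕ} (Γ : SimpleGraph (Fin n)) (X : Set (Fin n)) : Prop :=
  Γ.IsClique X ∧ ∀ Y : Set (Fin n), Γ.IsClique Y → X ⊆ Y → Y = X


/-- The subgroup of `P_Γ` generated by the generators `a_{ij}` with `{i,j} ⊆ X`. -/
def cliqueSubgroup {n : ℕ} (Γ : SimpleGraph (Fin n)) (X : Set (Fin n)) : Subgroup (GPB Γ) :=
  Subgroup.closure {g : GPB Γ | ∃ p : PBIdx n, (p.1.1 ∈ X ∧ p.1.2 ∈ X) ∧ g = PresentedGroup.of p}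

/-- The bipartite incidence graph of edges and 3-cliques (triangles) of `Γ`. -/
def incidenceGraph {n : ℕ} (Γ : SimpleGraph (Fin n)) :
    SimpleGraph (Γ.edgeSet ⊕ {T : Finset (Fin n) // Γ.IsNClique 3 T}) where
  Adj x y :=
    match x, y with
    | Sum.inl e, Sum.inr T => ∀ v : Fin n, v ∈ (e : Sym2 (Fin n)) → v ∈ T.1
    | Sum.inr T, Sum.inl e => ∀ v : Fin n, v ∈ (e : Sym2 (Fin n)) → v ∈ T.1
    | _, _ => False
  symm := ⟨by rintro (e | T) (f | S) h <;> exact h⟩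
  loopless := ⟨by rintro (e | T) h <;> exact h⟩

end GraphicBraid

/-! Write the clique as `x₁ < x₂ < x₃ < x₄` and `a_{ij}` for `a_{x_i x_j}`. The full twist
`Δ = (a₁₂ a₁₃ a₂₃)(a₁₄ a₂₄ a₃₄)` is a product of the six generators of `H`, each occurring once,
and the Artin relations of `P_4` make it central in `H`. Hence the generator `a_q` that `g` may
fail to commute with is, modulo the central subgroup `⟨Δ⟩`, a product of the other five:
`H = K ⟨Δ⟩` with `K` generated by those five. Central factors do not change commutators, so
`[H, H] = [K, K]`, and `g` centralizes `K`. -/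

open scoped commutatorElement Pointwise
open Subgroup

section GroupTheory

variable {G : Type*} [Group G]

theorem Subgroup.commutator_le_of_le_sup_of_le_centralizer {H K Z : Subgroup G}
    (hKH : K ≤ H) (hZ : Z ≤ centralizer H) (hH : H ≤ K ⊔ Z) : ⁅H, H⁆ ≤ ⁅K, K⁆ := by
  have hKZ : ((K ⊔ Z : Subgroup G) : Set G) = (K : Set G) * (Z : Set G) :=
    coe_mul_of_left_le_normalizer_right K Z
      ((le_centralizer_iff.mp (hZ.trans (centralizer_le hKH))).trans
        (centralizer_le_normalizer _))
  rw [commutator_le]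
  intro h₁ hh₁ h₂ hh₂
  obtain ⟨k₁, hk₁, z₁, hz₁, rfl⟩ : h₁ ∈ (K : Set G) * Z := hKZ ▸ hH hh₁
  obtain ⟨k₂, hk₂, z₂, hz₂, rfl⟩ : h₂ ∈ (K : Set G) * Z := hKZ ▸ hH hh₂
  have hz₁ : ⁅z₁, k₂ * z₂⁆ = 1 :=
    commutatorElement_eq_one_iff_mul_comm.mpr (mem_centralizer_iff.mp (hZ hz₁) _ hh₂).symm
  have hz₂ : ⁅k₁, z₂⁆ = 1 :=
    commutatorElement_eq_one_iff_mul_comm.mpr (mem_centralizer_iff.mp (hZ hz₂) _ (hKH hk₁))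
  rw [commutatorElement_mul_left_eq_conj_mul, hz₁, commutatorElement_mul_right_eq_mul_conj, hz₂]
  simpa using commutator_mem_commutator hk₁ hk₂

theorem mem_closure_sup_zpowers_prod {ι : Type*} (f : ι → G) {l : List ι} (hl : l.Nodup)
    {q : ι} (hq : q ∈ l) :
    f q ∈ closure (f '' {p | p ∈ l ∧ p ≠ q}) ⊔ zpowers (l.map f).prod := by
  have hprod : ∀ l' ⊆ l, q ∉ l' → (l'.map f).prod ∈ closure (f '' {p | p ∈ l ∧ p ≠ q}) :=
    fun l' hl' hq' => list_prod_mem <| List.forall_mem_map.mpr fun p hp =>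
      subset_closure ⟨p, ⟨hl' hp, by rintro rfl; exact hq' hp⟩, rfl⟩
  obtain ⟨l₁, l₂, rfl⟩ := List.append_of_mem hq
  have hq' : q ∉ l₁ ++ l₂ := (List.nodup_middle.mp hl).notMem
  have hfq : f q = ((l₁.map f).prod)⁻¹ * ((l₁ ++ q :: l₂).map f).prod * ((l₂.map f).prod)⁻¹ := by
    simp [mul_assoc]
  rw [hfq]
  refine mul_mem (mul_mem (mem_sup_left (inv_mem (hprod l₁ ?_ ?_)))
    (mem_sup_right (mem_zpowers _))) (mem_sup_left (inv_mem (hprod l₂ ?_ ?_)))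
  all_goals simp_all [List.subset_def]

theorem commute_of_mem_commutator_closure_of_commute_prod {ι : Type*} (f : ι → G)
    {l : List ι} (hl : l.Nodup) (hcentral : ∀ p ∈ l, Commute (l.map f).prod (f p))
    {g : G} {q : ι} (hg : ∀ p ∈ l, p ≠ q → Commute g (f p)) :
    ∀ x ∈ ⁅closure (f '' {p | p ∈ l}), closure (f '' {p | p ∈ l})⁆, Commute g x := by
  set K := closure (f '' {p | p ∈ l ∧ p ≠ q})
  have hKH : K ≤ closure (f '' {p | p ∈ l}) := closure_mono (Set.image_mono fun _ hp => hp.1)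
  have hZ : zpowers (l.map f).prod ≤ centralizer (closure (f '' {p | p ∈ l})) := by
    have hcent : closure (f '' {p | p ∈ l}) ≤ centralizer {(l.map f).prod} :=
      (closure_le _).mpr <| Set.image_subset_iff.mpr fun p hp =>
        mem_centralizer_singleton_iff.mpr (hcentral p hp).symm.eq
    exact zpowers_le.mpr <| mem_centralizer_iff.mpr fun h hh =>
      mem_centralizer_singleton_iff.mp (hcent hh)
  have hH : closure (f '' {p | p ∈ l}) ≤ K ⊔ zpowers (l.map f).prod := by
    rw [closure_le]
    rintro _ ⟨p, hp, rfl⟩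
    by_cases hpq : p = q
    · exact hpq ▸ mem_closure_sup_zpowers_prod f hl (hpq ▸ hp)
    · exact mem_sup_left (subset_closure ⟨p, ⟨hp, hpq⟩, rfl⟩)
  have hK : K ≤ centralizer {g} := (closure_le _).mpr <| by
    rintro _ ⟨p, ⟨hp, hpq⟩, rfl⟩
    exact mem_centralizer_singleton_iff.mpr (hg p hp hpq).symm.eq
  have hKK : ⁅K, K⁆ ≤ K := commutator_le.mpr fun k₁ hk₁ k₂ hk₂ => by
    rw [commutatorElement_def]
    exact mul_mem (mul_mem (mul_mem hk₁ hk₂) (inv_mem hk₁)) (inv_mem hk₂)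
  intro x hx
  have hxK : x ∈ K := hKK (commutator_le_of_le_sup_of_le_centralizer hKH hZ hH hx)
  exact (mem_centralizer_singleton_iff.mp (hK hxK)).symm

theorem PresentedGroup.commute_mk_of_commutatorElement_mem {α : Type*}
    {rels : Set (FreeGroup α)} {u v : FreeGroup α} (h : ⁅u, v⁆ ∈ rels) :
    Commute (PresentedGroup.mk rels u) (PresentedGroup.mk rels v) := by
  rw [← commutatorElement_eq_one_iff_commute, ← map_commutatorElement]
  exact PresentedGroup.one_of_mem h

end GroupTheory

section PureBraidFour

variable {G : Type*} [Group G]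

def TriangleRel (x y z : G) : Prop :=
  Commute (x * y) z ∧ Commute x (y * z)

namespace TriangleRel

variable {x y z : G} (h : TriangleRel x y z)
include h

theorem commute_left : Commute (x * y * z) x := by
  simpa only [mul_assoc] using (Commute.refl x).mul_left h.2.symm

theorem commute_right : Commute (x * y * z) z :=
  h.1.mul_left (Commute.refl z)

theorem commute_middle : Commute (x * y * z) y := by
  simpa [mul_assoc] using (h.commute_left.inv_right.mul_right
    (Commute.refl (x * y * z))).mul_right h.commute_right.inv_right

end TriangleRel

/-- The Artin relations of `P_4` that make the full twist central. -/
structure IsPureBraidFour (a₁₂ a₁₃ a₂₃ a₁₄ a₂₄ a₃₄ : G) : Prop where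
  far : Commute a₁₂ a₃₄
  nested : Commute a₁₄ a₂₃
  crossed : Commute a₂₄ (a₃₄ * a₁₃ * a₃₄⁻¹)
  tri₁₂₃ : TriangleRel a₁₂ a₁₃ a₂₃
  tri₁₂₄ : TriangleRel a₁₂ a₁₄ a₂₄
  tri₁₃₄ : TriangleRel a₁₃ a₁₄ a₃₄
  tri₂₃₄ : TriangleRel a₂₃ a₂₄ a₃₄

namespace IsPureBraidFour

variable {a₁₂ a₁₃ a₂₃ a₁₄ a₂₄ a₃₄ : G} (h : IsPureBraidFour a₁₂ a₁₃ a₂₃ a₁₄ a₂₄ a₃₄)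
include h

theorem conj_a₁₃ : a₁₄⁻¹ * a₁₃ * a₁₄ = a₃₄ * a₁₃ * a₃₄⁻¹ := by
  calc a₁₄⁻¹ * a₁₃ * a₁₄ = a₁₄⁻¹ * (a₁₃ * (a₁₄ * a₃₄)) * a₃₄⁻¹ := by group
    _ = a₁₄⁻¹ * (a₁₄ * a₃₄ * a₁₃) * a₃₄⁻¹ := by rw [h.tri₁₃₄.2.eq]
    _ = a₃₄ * a₁₃ * a₃₄⁻¹ := by group

theorem commute_a₁₄a₂₄a₃₄_a₁₂ : Commute (a₁₄ * a₂₄ * a₃₄) a₁₂ :=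
  h.tri₁₂₄.2.symm.mul_left h.far.symm

theorem commute_a₁₄a₂₄a₃₄_a₂₃ : Commute (a₁₄ * a₂₄ * a₃₄) a₂₃ := by
  simpa only [mul_assoc] using h.nested.mul_left h.tri₂₃₄.2.symm

theorem commute_a₁₄a₂₄a₃₄_a₁₃ : Commute (a₁₄ * a₂₄ * a₃₄) a₁₃ :=
  calc a₁₄ * a₂₄ * a₃₄ * a₁₃ = a₁₄ * (a₂₄ * (a₃₄ * a₁₃ * a₃₄⁻¹)) * a₃₄ := by group
    _ = a₁₄ * (a₃₄ * a₁₃ * a₃₄⁻¹ * a₂₄) * a₃₄ := by rw [h.crossed.eq]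
    _ = a₁₄ * (a₁₄⁻¹ * a₁₃ * a₁₄) * a₂₄ * a₃₄ := by rw [h.conj_a₁₃]; group
    _ = a₁₃ * (a₁₄ * a₂₄ * a₃₄) := by group

theorem commute_a₁₂a₁₃a₁₄_a₂₄ : Commute (a₁₂ * a₁₃ * a₁₄) a₂₄ := by
  have : a₁₂ * a₁₃ * a₁₄ = a₁₂ * a₁₄ * (a₃₄ * a₁₃ * a₃₄⁻¹) := by rw [← h.conj_a₁₃]; group
  exact this ▸ h.tri₁₂₄.1.mul_left h.crossed.symm

theorem commute_a₁₂a₁₃a₁₄_a₃₄ : Commute (a₁₂ * a₁₃ * a₁₄) a₃₄ := by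
  simpa only [mul_assoc] using h.far.mul_left h.tri₁₃₄.1

theorem commute_prod :
    ∀ x ∈ [a₁₂, a₁₃, a₂₃, a₁₄, a₂₄, a₃₄], Commute [a₁₂, a₁₃, a₂₃, a₁₄, a₂₄, a₃₄].prod x := by
  have hΔ : [a₁₂, a₁₃, a₂₃, a₁₄, a₂₄, a₃₄].prod = a₁₂ * a₁₃ * a₂₃ * (a₁₄ * a₂₄ * a₃₄) := by
    simp [mul_assoc]
  have hΔ' : [a₁₂, a₁₃, a₂₃, a₁₄, a₂₄, a₃₄].prod = a₁₂ * a₁₃ * a₁₄ * (a₂₃ * a₂₄ * a₃₄) := by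
    simp only [List.prod_cons, List.prod_nil, mul_one, mul_assoc, h.nested.left_comm]
  have hupper : Commute (a₁₄ * a₂₄ * a₃₄) (a₁₂ * a₁₃ * a₂₃) :=
    (h.commute_a₁₄a₂₄a₃₄_a₁₂.mul_right h.commute_a₁₄a₂₄a₃₄_a₁₃).mul_right h.commute_a₁₄a₂₄a₃₄_a₂₃
  have h₂₄ : Commute [a₁₂, a₁₃, a₂₃, a₁₄, a₂₄, a₃₄].prod a₂₄ :=
    hΔ' ▸ h.commute_a₁₂a₁₃a₁₄_a₂₄.mul_left h.tri₂₃₄.commute_middle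
  have h₃₄ : Commute [a₁₂, a₁₃, a₂₃, a₁₄, a₂₄, a₃₄].prod a₃₄ :=
    hΔ' ▸ h.commute_a₁₂a₁₃a₁₄_a₃₄.mul_left h.tri₂₃₄.commute_right
  have h₁₄ : Commute [a₁₂, a₁₃, a₂₃, a₁₄, a₂₄, a₃₄].prod a₁₄ := by
    have hU := ((hΔ ▸ hupper.symm.mul_left (Commute.refl _)).mul_right h₃₄.inv_right).mul_right
      h₂₄.inv_right
    rwa [mul_inv_cancel_right, mul_inv_cancel_right] at hU
  simp only [List.mem_cons, List.not_mem_nil, or_false]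
  rintro x (rfl | rfl | rfl | rfl | rfl | rfl)
  exacts [hΔ ▸ h.tri₁₂₃.commute_left.mul_left h.commute_a₁₄a₂₄a₃₄_a₁₂,
    hΔ ▸ h.tri₁₂₃.commute_middle.mul_left h.commute_a₁₄a₂₄a₃₄_a₁₃,
    hΔ ▸ h.tri₁₂₃.commute_right.mul_left h.commute_a₁₄a₂₄a₃₄_a₂₃, h₁₄, h₂₄, h₃₄]

end IsPureBraidFour

end PureBraidFour

namespace GraphicBraid

variable {n : ℕ} {Γ : SimpleGraph (Fin n)}

theorem mk_ofIdx {i j : Fin n} (h : i < j) :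
    PresentedGroup.mk (graphicRels Γ) (ofIdx h) = agen Γ h :=
  rfl

theorem commute_agen_of_unlinked {i j r s : Fin n} (hij : i < j) (hrs : r < s)
    (h : s < i ∨ i < r ∧ s < j) : Commute (agen Γ hij) (agen Γ hrs) :=
  PresentedGroup.commute_mk_of_commutatorElement_mem
    (Or.inl (Or.inl (Or.inl ⟨i, j, r, s, hij, hrs, h, rfl⟩)))

theorem commute_agen_conj {r i s j : Fin n} (hri : r < i) (his : i < s) (hsj : s < j) :
    Commute (agen Γ (his.trans hsj)) (agen Γ hsj * agen Γ (hri.trans his) * (agen Γ hsj)⁻¹) := by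
  have h := PresentedGroup.commute_mk_of_commutatorElement_mem (rels := graphicRels Γ)
    (Or.inl (Or.inl (Or.inr ⟨r, i, s, j, hri, his, hsj, rfl⟩)))
  simpa only [map_mul, map_inv, mk_ofIdx] using h

theorem triangleRel_agen {i j r : Fin n} (hij : i < j) (hjr : j < r) :
    TriangleRel (agen Γ hij) (agen Γ (hij.trans hjr)) (agen Γ hjr) := by
  have h₁ := PresentedGroup.commute_mk_of_commutatorElement_mem (rels := graphicRels Γ)
    (Or.inl (Or.inr ⟨i, j, r, hij, hjr, Or.inl rfl⟩))
  have h₂ := PresentedGroup.commute_mk_of_commutatorElement_mem (rels := graphicRels Γ)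
    (Or.inl (Or.inr ⟨i, j, r, hij, hjr, Or.inr rfl⟩))
  rw [map_mul] at h₁ h₂
  exact ⟨h₁, h₂⟩

theorem isPureBraidFour_agen {i j k l : Fin n} (hij : i < j) (hjk : j < k) (hkl : k < l) :
    IsPureBraidFour (agen Γ hij) (agen Γ (hij.trans hjk)) (agen Γ hjk)
      (agen Γ (hij.trans (hjk.trans hkl))) (agen Γ (hjk.trans hkl)) (agen Γ hkl) where
  far := (commute_agen_of_unlinked hkl hij (Or.inl hjk)).symm
  nested := commute_agen_of_unlinked _ hjk (Or.inr ⟨hij, hkl⟩)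
  crossed := commute_agen_conj hij hjk hkl
  tri₁₂₃ := triangleRel_agen hij hjk
  tri₁₂₄ := triangleRel_agen hij (hjk.trans hkl)
  tri₁₃₄ := triangleRel_agen (hij.trans hjk) hkl
  tri₂₃₄ := triangleRel_agen hjk hkl

/-- Ordered so that the product of the corresponding generators is the full twist. -/
def fourPairs (e : Fin 4 ↪o Fin n) : List (PBIdx n) :=
  [⟨(e 0, e 1), e.lt_iff_lt.2 (by decide)⟩, ⟨(e 0, e 2), e.lt_iff_lt.2 (by decide)⟩,
    ⟨(e 1, e 2), e.lt_iff_lt.2 (by decide)⟩, ⟨(e 0, e 3), e.lt_iff_lt.2 (by decide)⟩,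
    ⟨(e 1, e 3), e.lt_iff_lt.2 (by decide)⟩, ⟨(e 2, e 3), e.lt_iff_lt.2 (by decide)⟩]

theorem fourPairs_nodup (e : Fin 4 ↪o Fin n) : (fourPairs e).Nodup := by
  simp [fourPairs, Subtype.ext_iff, e.injective.eq_iff]

theorem mem_fourPairs_iff (e : Fin 4 ↪o Fin n) {p : PBIdx n} :
    p ∈ fourPairs e ↔ p.1.1 ∈ Set.range e ∧ p.1.2 ∈ Set.range e := by
  constructor
  · simp only [fourPairs, List.mem_cons, List.not_mem_nil, or_false]
    rintro (rfl | rfl | rfl | rfl | rfl | rfl) <;> simp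
  · rintro ⟨⟨a, ha⟩, ⟨b, hb⟩⟩
    obtain ⟨⟨x, y⟩, hxy⟩ := p
    obtain rfl : e a = x := ha
    obtain rfl : e b = y := hb
    have hab : a < b := e.lt_iff_lt.1 hxy
    fin_cases a <;> fin_cases b <;> simp_all [fourPairs]

theorem commute_prod_fourPairs (Γ : SimpleGraph (Fin n)) (e : Fin 4 ↪o Fin n) :
    ∀ p ∈ fourPairs e, Commute ((fourPairs e).map PresentedGroup.of).prod
      (PresentedGroup.of (rels := graphicRels Γ) p) := by
  have h := isPureBraidFour_agen (Γ := Γ) (e.lt_iff_lt.2 (by decide : (0 : Fin 4) < 1))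
    (e.lt_iff_lt.2 (by decide : (1 : Fin 4) < 2)) (e.lt_iff_lt.2 (by decide : (2 : Fin 4) < 3))
  simpa [fourPairs, agen] using h.commute_prod

theorem cliqueSubgroup_eq_closure {X : Set (Fin n)} {l : List (PBIdx n)}
    (hl : ∀ p, p ∈ l ↔ p.1.1 ∈ X ∧ p.1.2 ∈ X) :
    cliqueSubgroup Γ X = closure (PresentedGroup.of '' {p | p ∈ l}) := by
  simp only [cliqueSubgroup, hl]
  congr 1
  ext
  simp [eq_comm]

/-- If `X` is a `4`-clique of `Γ` and `g ∈ P_Γ` commutes with at least five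
of the six generators `a_{ij}`, `{i,j} ⊆ X`, then `g` commutes with every element of the
commutator subgroup `[H, H]`, where `H` is generated by the six generators. -/
theorem five_of_six_commute {n : ℕ} (Γ : SimpleGraph (Fin n)) (X : Finset (Fin n))
    (hX : Γ.IsNClique 4 X) (g : GPB Γ)
    (hcomm : ∃ q : PBIdx n, ∀ p : PBIdx n, p.1.1 ∈ X → p.1.2 ∈ X → p ≠ q →
      Commute g (PresentedGroup.of (rels := graphicRels Γ) p)) :
    ∀ x ∈ ⁅cliqueSubgroup Γ (X : Set (Fin n)), cliqueSubgroup Γ (X : Set (Fin n))⁆,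
      Commute g x := by
  obtain ⟨q, hq⟩ := hcomm
  set e := X.orderEmbOfFin hX.card_eq
  have hmem : ∀ p, p ∈ fourPairs e ↔ p.1.1 ∈ (X : Set (Fin n)) ∧ p.1.2 ∈ (X : Set (Fin n)) := by
    simpa only [e, Finset.range_orderEmbOfFin] using fun p => mem_fourPairs_iff e (p := p)
  rw [cliqueSubgroup_eq_closure hmem]
  exact commute_of_mem_commutator_closure_of_commute_prod _ (fourPairs_nodup e)
    (commute_prod_fourPairs Γ e) fun p hp => hq p ((hmem p).1 hp).1 ((hmem p).1 hp).2

end GraphicBraid
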